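/- Let f : ℝⁿ → ℝ be twice continuously differentiable and σ-strongly convex for some σ > 0 (i.e. f(y) ≥ f(x) + ⟨∇f(x), y − x⟩ + (σ/2)‖y − x‖² for all x, y ∈ ℝⁿ), with each partial derivative uniformly Lipschitz along its own coordinate with common constant L_max > 0 (i.e. |∂ᵢf(x + t eᵢ) − ∂ᵢf(x)| ≤ L_max·|t| for all x ∈ ℝⁿ, t ∈ ℝ, i ∈ {1,…,n}). Let x* be a global minimizer of f with f* = f(x*). Let (iₖ)ₖ be i.i.d. indices uniformly distributed on {1,…,n} and define the randomized coordinate descent iterates x₀ ∈ ℝⁿ, x_{k+1} = x_k − (1/L_max)·∂_{i_k}f(x_k)·e_{i_k}. Then for every k ≥ 0, the expectation over the random indices satisfies E[f(x_k)] − f* ≤ (1 − σ/(n L_max))ᵏ · (f(x₀) − f*). -/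

import Mathlib

open scoped BigOperators RealInnerProductSpace

/-- The `i`-th partial derivative of `f` at `x`, i.e. `[∇f(x)]ᵢ`. -/
noncomputable def partialDeriv' {n : ℕ} (f : EuclideanSpace ℝ (Fin n) → ℝ)
    (x : EuclideanSpace ℝ (Fin n)) (i : Fin n) : ℝ :=
  fderiv ℝ f x (EuclideanSpace.single i 1)

/-- One coordinate gradient step with step size `1/L` along coordinate `i`:
`x ↦ x − (1/L)·∂ᵢf(x)·eᵢ`. -/
noncomputable def cdStep {n : ℕ} (f : EuclideanSpace ℝ (Fin n) → ℝ) (L : ℝ)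
    (x : EuclideanSpace ℝ (Fin n)) (i : Fin n) : EuclideanSpace ℝ (Fin n) :=
  x - (partialDeriv' f x i / L) • EuclideanSpace.single i 1

/-- The randomized coordinate descent iterates driven by the index sequence `ω`:
`x₀` is given, and `x_{k+1} = x_k − (1/L)·∂_{ω k}f(x_k)·e_{ω k}`. -/
noncomputable def cdIter {n : ℕ} (f : EuclideanSpace ℝ (Fin n) → ℝ) (L : ℝ)
    (x₀ : EuclideanSpace ℝ (Fin n)) (ω : ℕ → Fin n) : ℕ → EuclideanSpace ℝ (Fin n)
  | 0 => x₀
  | k + 1 => cdStep f L (cdIter f L x₀ ω k) (ω k)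

/-!
Along a coordinate line the partial derivative is `L`-Lipschitz, so the one-dimensional descent
lemma shows that the step along `eᵢ` decreases `f` by at least `(∂ᵢf x)² / (2L)`. Averaging over
the `n` coordinates, the expected decrease is `‖∇f x‖² / (2nL)`, and strong convexity bounds
`f x - f*` by `‖∇f x‖² / (2σ)` (minimise its quadratic lower bound). Hence the expected gap
contracts by the factor `1 - σ/(nL)` at each step; this factor is nonnegative because
comparing the quadratic bounds along a coordinate direction forces `σ ≤ L`.
-/

theorem le_add_mul_deriv_add_sq_of_abs_deriv_sub_le {φ : ℝ → ℝ} (hφ : Differentiable ℝ φ)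
    {L : ℝ} (hLip : ∀ s, |deriv φ s - deriv φ 0| ≤ L * |s|) (t : ℝ) :
    φ t ≤ φ 0 + t * deriv φ 0 + L / 2 * t ^ 2 := by
  set ψ : ℝ → ℝ := fun s => φ s - (φ 0 + s * deriv φ 0 + L / 2 * s ^ 2)
  have hψ : ∀ s, HasDerivAt ψ (deriv φ s - deriv φ 0 - L * s) s := fun s => by
    have h := (hφ s).hasDerivAt.fun_sub ((((hasDerivAt_id s).mul_const (deriv φ 0)).const_add
      (φ 0)).fun_add ((hasDerivAt_pow 2 s).const_mul (L / 2)))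
    exact h.congr_deriv (by push_cast; ring)
  have hψc : Continuous ψ := continuous_iff_continuousAt.2 fun s => (hψ s).continuousAt
  have hψd : Differentiable ℝ ψ := fun s => (hψ s).differentiableAt
  suffices ψ t ≤ ψ 0 by simp [ψ] at this; linarith
  rcases le_total 0 t with ht | ht
  · refine antitoneOn_of_deriv_nonpos (convex_Icc 0 t) hψc.continuousOn hψd.differentiableOn
      (fun s hs => ?_) ⟨le_rfl, ht⟩ ⟨ht, le_rfl⟩ ht
    rw [interior_Icc] at hs
    have := (abs_le.1 (hLip s)).2
    rw [abs_of_pos hs.1] at this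
    rw [(hψ s).deriv]; linarith
  · refine monotoneOn_of_deriv_nonneg (convex_Icc t 0) hψc.continuousOn hψd.differentiableOn
      (fun s hs => ?_) ⟨le_rfl, ht⟩ ⟨ht, le_rfl⟩ ht
    rw [interior_Icc] at hs
    have := (abs_le.1 (hLip s)).1
    rw [abs_of_neg hs.2] at this
    rw [(hψ s).deriv]; linarith

theorem neg_norm_sq_div_le_inner_add_mul_norm_sq {E : Type*} [NormedAddCommGroup E]
    [InnerProductSpace ℝ E] {σ : ℝ} (hσ : 0 < σ) (g z : E) :
    -(‖g‖ ^ 2 / (2 * σ)) ≤ ⟪g, z⟫ + σ / 2 * ‖z‖ ^ 2 := by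
  have h : 0 ≤ ‖σ • z + g‖ ^ 2 := sq_nonneg _
  rw [norm_add_sq_real, norm_smul, real_inner_smul_left, real_inner_comm,
    Real.norm_of_nonneg hσ.le] at h
  have hsum : ‖g‖ ^ 2 / (2 * σ) + (⟪g, z⟫ + σ / 2 * ‖z‖ ^ 2) =
      ((σ * ‖z‖) ^ 2 + 2 * (σ * ⟪g, z⟫) + ‖g‖ ^ 2) / (2 * σ) := by
    field_simp; ring
  rw [neg_le_iff_add_nonneg', hsum]
  exact div_nonneg h (by positivity)

section CoordinateDescent

variable {n : ℕ} {f : EuclideanSpace ℝ (Fin n) → ℝ}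

def CoordinatewiseSmooth (f : EuclideanSpace ℝ (Fin n) → ℝ) (L : ℝ) : Prop :=
  ∀ (x : EuclideanSpace ℝ (Fin n)) (t : ℝ) (i : Fin n),
    |partialDeriv' f (x + t • EuclideanSpace.single i 1) i - partialDeriv' f x i| ≤ L * |t|

theorem inner_gradient_single (x : EuclideanSpace ℝ (Fin n)) (i : Fin n) :
    ⟪gradient f x, EuclideanSpace.single i 1⟫ = partialDeriv' f x i := by
  rw [← InnerProductSpace.toDual_apply_apply, toDual_gradient, partialDeriv']

theorem gradient_apply_eq_partialDeriv' (x : EuclideanSpace ℝ (Fin n)) (i : Fin n) :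
    gradient f x i = partialDeriv' f x i := by
  rw [← inner_gradient_single, EuclideanSpace.inner_single_right]
  simp

theorem norm_gradient_sq (x : EuclideanSpace ℝ (Fin n)) :
    ‖gradient f x‖ ^ 2 = ∑ i, partialDeriv' f x i ^ 2 := by
  simp [EuclideanSpace.norm_sq_eq, gradient_apply_eq_partialDeriv']

theorem hasDerivAt_comp_add_smul_single (hf : Differentiable ℝ f) (x : EuclideanSpace ℝ (Fin n))
    (i : Fin n) (t : ℝ) :
    HasDerivAt (fun s : ℝ => f (x + s • EuclideanSpace.single i 1))
      (partialDeriv' f (x + t • EuclideanSpace.single i 1) i) t := by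
  have hline : HasDerivAt (fun s : ℝ => x + s • EuclideanSpace.single i (1 : ℝ))
      (EuclideanSpace.single i 1) t := by
    simpa using ((hasDerivAt_id t).smul_const (EuclideanSpace.single i (1 : ℝ))).const_add x
  exact (hf _).hasFDerivAt.comp_hasDerivAt t hline

theorem CoordinatewiseSmooth.le_add_mul_partialDeriv'_add_sq {L : ℝ}
    (hLip : CoordinatewiseSmooth f L) (hf : Differentiable ℝ f) (x : EuclideanSpace ℝ (Fin n))
    (i : Fin n) (t : ℝ) :
    f (x + t • EuclideanSpace.single i 1) ≤ f x + t * partialDeriv' f x i + L / 2 * t ^ 2 := by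
  have hderiv s := (hasDerivAt_comp_add_smul_single hf x i s).deriv
  have h := le_add_mul_deriv_add_sq_of_abs_deriv_sub_le
    (fun s => (hasDerivAt_comp_add_smul_single hf x i s).differentiableAt)
    (fun s => by simpa [hderiv] using hLip x s i) t
  simpa [hderiv] using h

theorem CoordinatewiseSmooth.cdStep_le {L : ℝ} (hLip : CoordinatewiseSmooth f L)
    (hf : Differentiable ℝ f) (hL : 0 < L) (x : EuclideanSpace ℝ (Fin n)) (i : Fin n) :
    f (cdStep f L x i) ≤ f x - partialDeriv' f x i ^ 2 / (2 * L) := by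
  have h := hLip.le_add_mul_partialDeriv'_add_sq hf x i (-(partialDeriv' f x i / L))
  rw [neg_smul, ← sub_eq_add_neg] at h
  calc f (cdStep f L x i) ≤ _ := h
    _ = f x - partialDeriv' f x i ^ 2 / (2 * L) := by field_simp; ring

theorem CoordinatewiseSmooth.sum_cdStep_le {L : ℝ} (hLip : CoordinatewiseSmooth f L)
    (hf : Differentiable ℝ f) (hL : 0 < L) (x : EuclideanSpace ℝ (Fin n)) :
    ∑ i, f (cdStep f L x i) ≤ n * f x - ‖gradient f x‖ ^ 2 / (2 * L) := by
  calc ∑ i, f (cdStep f L x i) ≤ ∑ i, (f x - partialDeriv' f x i ^ 2 / (2 * L)) :=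
        Finset.sum_le_sum fun i _ => hLip.cdStep_le hf hL x i
    _ = n * f x - ‖gradient f x‖ ^ 2 / (2 * L) := by
        simp [Finset.sum_sub_distrib, norm_gradient_sq, Finset.sum_div]

theorem CoordinatewiseSmooth.le_of_strongConvex {σ L : ℝ} (hLip : CoordinatewiseSmooth f L)
    (hf : Differentiable ℝ f)
    (hstrong : ∀ x y : EuclideanSpace ℝ (Fin n),
      f x + ⟪gradient f x, y - x⟫ + σ / 2 * ‖y - x‖ ^ 2 ≤ f y) (i : Fin n) :
    σ ≤ L := by
  have hup := hLip.le_add_mul_partialDeriv'_add_sq hf 0 i 1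
  have hlo := hstrong 0 (0 + (1 : ℝ) • EuclideanSpace.single i 1)
  simp only [add_sub_cancel_left, one_smul, inner_gradient_single, PiLp.norm_single,
    norm_one, one_pow, one_mul, mul_one] at hup hlo
  linarith

theorem CoordinatewiseSmooth.sum_cdStep_sub_le {σ L : ℝ} (hLip : CoordinatewiseSmooth f L)
    (hf : Differentiable ℝ f) (hL : 0 < L) (hσ : 0 < σ)
    (hstrong : ∀ x y : EuclideanSpace ℝ (Fin n),
      f x + ⟪gradient f x, y - x⟫ + σ / 2 * ‖y - x‖ ^ 2 ≤ f y)
    (x y : EuclideanSpace ℝ (Fin n)) :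
    ∑ i, f (cdStep f L x i) - n * f y ≤ (n - σ / L) * (f x - f y) := by
  have hPL : f x - f y ≤ ‖gradient f x‖ ^ 2 / (2 * σ) := by
    linarith [hstrong x y, neg_norm_sq_div_le_inner_add_mul_norm_sq hσ (gradient f x) (y - x)]
  have hPL' : σ / L * (f x - f y) ≤ ‖gradient f x‖ ^ 2 / (2 * L) := by
    calc σ / L * (f x - f y) ≤ σ / L * (‖gradient f x‖ ^ 2 / (2 * σ)) := by gcongr
      _ = ‖gradient f x‖ ^ 2 / (2 * L) := by field_simp
  linarith [hLip.sum_cdStep_le hf hL x]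

end CoordinateDescent

/-- Only the first `k` entries are ever read by the first `k` iterates, so the padding `d` is
immaterial. -/
def seqOfFin {α : Type*} {k : ℕ} (d : α) (s : Fin k → α) : ℕ → α :=
  fun j => if h : j < k then s ⟨j, h⟩ else d

section Iterates

variable {n : ℕ} (f : EuclideanSpace ℝ (Fin n) → ℝ) (L : ℝ) (x₀ : EuclideanSpace ℝ (Fin n))

theorem cdIter_congr {ω ω' : ℕ → Fin n} {k : ℕ} (h : ∀ j < k, ω j = ω' j) :
    cdIter f L x₀ ω k = cdIter f L x₀ ω' k := by
  induction k with
  | zero => rfl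
  | succ k ih =>
    rw [cdIter, cdIter, ih fun j hj => h j (by omega), h k k.lt_succ_self]

theorem cdIter_seqOfFin_snoc {k : ℕ} (d : Fin n) (s : Fin k → Fin n) (a : Fin n) :
    cdIter f L x₀ (seqOfFin d (Fin.snoc s a)) (k + 1) =
      cdStep f L (cdIter f L x₀ (seqOfFin d s) k) a := by
  rw [cdIter, cdIter_congr f L x₀ (ω' := seqOfFin d s) fun j hj => ?_]
  · simp only [seqOfFin, dif_pos k.lt_succ_self]
    exact congrArg _ (Fin.snoc_last (α := fun _ => Fin n) ..)
  · simp only [seqOfFin, dif_pos hj, dif_pos (Nat.lt_succ_of_lt hj)]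
    exact Fin.snoc_castSucc (α := fun _ => Fin n) (i := ⟨j, hj⟩) ..

theorem sum_cdIter_succ {β : Type*} [AddCommMonoid β] (g : EuclideanSpace ℝ (Fin n) → β)
    (d : Fin n) (k : ℕ) :
    ∑ s : Fin (k + 1) → Fin n, g (cdIter f L x₀ (seqOfFin d s) (k + 1)) =
      ∑ s : Fin k → Fin n, ∑ a, g (cdStep f L (cdIter f L x₀ (seqOfFin d s) k) a) := by
  rw [← (Fin.snocEquiv fun _ => Fin n).sum_comp, Fintype.sum_prod_type, Finset.sum_comm]
  simp [Fin.snocEquiv, cdIter_seqOfFin_snoc]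

end Iterates

theorem CoordinatewiseSmooth.average_cdIter_succ_sub_le {n : ℕ} {f : EuclideanSpace ℝ (Fin n) → ℝ}
    {σ L : ℝ} (hLip : CoordinatewiseSmooth f L) (hf : Differentiable ℝ f) (hL : 0 < L)
    (hσ : 0 < σ) (hstrong : ∀ x y : EuclideanSpace ℝ (Fin n),
      f x + ⟪gradient f x, y - x⟫ + σ / 2 * ‖y - x‖ ^ 2 ≤ f y)
    (x₀ y : EuclideanSpace ℝ (Fin n)) (d : Fin n) (k : ℕ) :
    ((n : ℝ) ^ (k + 1))⁻¹ * ∑ s : Fin (k + 1) → Fin n, f (cdIter f L x₀ (seqOfFin d s) (k + 1))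
        - f y ≤
      (1 - σ / (n * L)) *
        (((n : ℝ) ^ k)⁻¹ * ∑ s : Fin k → Fin n, f (cdIter f L x₀ (seqOfFin d s) k) - f y) := by
  have hn : (n : ℝ) ≠ 0 := by have := d.pos; positivity
  set X := fun s : Fin k → Fin n => cdIter f L x₀ (seqOfFin d s) k
  have hstep := Finset.sum_le_sum fun s (_ : s ∈ Finset.univ) =>
    hLip.sum_cdStep_sub_le hf hL hσ hstrong (X s) y
  simp only [Finset.sum_sub_distrib, ← Finset.mul_sum, Finset.sum_const, Finset.card_univ,
    Fintype.card_fun, Fintype.card_fin, nsmul_eq_mul, Nat.cast_pow] at hstep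
  rw [sum_cdIter_succ]
  calc _ = ((n : ℝ) ^ (k + 1))⁻¹ *
        (∑ s, ∑ a, f (cdStep f L (X s) a) - (n : ℝ) ^ k * (n * f y)) := by
          field_simp; ring
    _ ≤ ((n : ℝ) ^ (k + 1))⁻¹ * ((n - σ / L) * (∑ s, f (X s) - (n : ℝ) ^ k * f y)) := by
          gcongr; linarith
    _ = _ := by field_simp; ring

theorem randomized_coordinate_descent_linear_rate_general
    {n : ℕ} (hn : 0 < n) (f : EuclideanSpace ℝ (Fin n) → ℝ)
    (hf : ContDiff ℝ 2 f)
    (σ : ℝ) (hσ : 0 < σ)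
    (hstrong : ∀ x y : EuclideanSpace ℝ (Fin n),
      f x + ⟪gradient f x, y - x⟫ + σ / 2 * ‖y - x‖ ^ 2 ≤ f y)
    (Lmax : ℝ) (hL : 0 < Lmax)
    (hLip : ∀ (x : EuclideanSpace ℝ (Fin n)) (t : ℝ) (i : Fin n),
      |partialDeriv' f (x + t • EuclideanSpace.single i 1) i - partialDeriv' f x i| ≤
        Lmax * |t|)
    (xstar : EuclideanSpace ℝ (Fin n))
    (x₀ : EuclideanSpace ℝ (Fin n))
    (k : ℕ) :
    ((n : ℝ) ^ k)⁻¹ * (∑ σids : Fin k → Fin n,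
        f (cdIter f Lmax x₀ (fun j => if h : j < k then σids ⟨j, h⟩ else ⟨0, hn⟩) k))
      - f xstar ≤ (1 - σ / (n * Lmax)) ^ k * (f x₀ - f xstar) := by
  have hLip : CoordinatewiseSmooth f Lmax := hLip
  have hdiff : Differentiable ℝ f := hf.differentiable (by norm_num)
  have hσL : σ ≤ Lmax := hLip.le_of_strongConvex hdiff hstrong ⟨0, hn⟩
  have hrate : 0 ≤ 1 - σ / (n * Lmax) := by
    rw [sub_nonneg, div_le_one (by positivity)]
    exact hσL.trans (le_mul_of_one_le_left hL.le (by exact_mod_cast hn))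
  induction k with
  | zero => simp [cdIter]
  | succ k ih =>
    calc _ ≤ (1 - σ / (n * Lmax)) * (((n : ℝ) ^ k)⁻¹ *
          ∑ s : Fin k → Fin n, f (cdIter f Lmax x₀ (seqOfFin ⟨0, hn⟩ s) k) - f xstar) :=
          hLip.average_cdIter_succ_sub_le hdiff hL hσ hstrong x₀ xstar _ k
      _ ≤ (1 - σ / (n * Lmax)) * ((1 - σ / (n * Lmax)) ^ k * (f x₀ - f xstar)) := by
          gcongr; exact ih
      _ = (1 - σ / (n * Lmax)) ^ (k + 1) * (f x₀ - f xstar) := by ring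

/-- Randomized coordinate descent on a C², `σ`-strongly convex `f : ℝⁿ → ℝ`
(`σ > 0`) whose partial derivatives are uniformly `L_max`-Lipschitz along their own
coordinates, with global minimizer `x*`, satisfies for every `k ≥ 0`
`E[f(x_k)] − f* ≤ (1 − σ/(n L_max))ᵏ · (f(x₀) − f*)`, where the expectation is the
uniform average over all `n^k` choices of the first `k` coordinate indices. -/
theorem randomized_coordinate_descent_linear_rate
    {n : ℕ} (hn : 0 < n) (f : EuclideanSpace ℝ (Fin n) → ℝ)
    (hf : ContDiff ℝ 2 f)
    (σ : ℝ) (hσ : 0 < σ)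
    (hstrong : ∀ x y : EuclideanSpace ℝ (Fin n),
      f x + ⟪gradient f x, y - x⟫ + σ / 2 * ‖y - x‖ ^ 2 ≤ f y)
    (Lmax : ℝ) (hL : 0 < Lmax)
    (hLip : ∀ (x : EuclideanSpace ℝ (Fin n)) (t : ℝ) (i : Fin n),
      |partialDeriv' f (x + t • EuclideanSpace.single i 1) i - partialDeriv' f x i| ≤
        Lmax * |t|)
    (xstar : EuclideanSpace ℝ (Fin n)) (hmin : ∀ y, f xstar ≤ f y)
    (x₀ : EuclideanSpace ℝ (Fin n))
    (k : ℕ) :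
    ((n : ℝ) ^ k)⁻¹ * (∑ σids : Fin k → Fin n,
        f (cdIter f Lmax x₀ (fun j => if h : j < k then σids ⟨j, h⟩ else ⟨0, hn⟩) k))
      - f xstar ≤ (1 - σ / (n * Lmax)) ^ k * (f x₀ - f xstar) :=
  randomized_coordinate_descent_linear_rate_general hn f hf σ hσ hstrong Lmax hL hLip xstar x₀ k
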